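/- arXiv:1707.00630 — 2 statements merged into one kernel-verified Lean document; each statement's English description precedes it below -/
import Mathlib

section
/- If θ ∈ [0, 1/3] and the orbit of θ under the angle doubling map d(x) = 2x mod 1 is contained in the interval [θ/2, (1+θ)/2], then the orbit of Θ = 1/2 + θ/4 under doubling never enters the open interval (1−Θ, Θ). -/
/-- The angle doubling map on [0,1): d(x) = 2x mod 1. -/
noncomputable def double (x : ℝ) : ℝ := Int.fract (2 * x)

/-- If θ ∈ [0,1/3] and the orbit of θ under doubling is contained in
[θ/2, (1+θ)/2], then the orbit of Θ = 1/2 + θ/4 under doubling never enters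
the open interval (1−Θ, Θ). -/
theorem stmt0 (θ : ℝ) (hθ : θ ∈ Set.Icc (0:ℝ) (1/3))
    (horb : ∀ n : ℕ, double^[n] θ ∈ Set.Icc (θ/2) ((1+θ)/2)) :
    ∀ n : ℕ, double^[n] (1/2 + θ/4) ∉ Set.Ioo (1 - (1/2 + θ/4)) (1/2 + θ/4) := by
  obtain ⟨hθ0, hθ1⟩ := hθ
  have h1 : double (1/2 + θ/4) = θ/2 := by
    have : (2 : ℝ) * (1/2 + θ/4) = (1 : ℤ) + θ/2 := by push_cast; ring
    rw [double, this, Int.fract_intCast_add, Int.fract_eq_self.mpr ⟨by linarith, by linarith⟩]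
  have h2 : double (θ/2) = θ := by
    have : (2 : ℝ) * (θ/2) = θ := by ring
    rw [double, this, Int.fract_eq_self.mpr ⟨by linarith, by linarith⟩]
  have key : ∀ n : ℕ, double^[n + 2] (1/2 + θ/4) = double^[n] θ := by
    intro n
    rw [Function.iterate_succ_apply, h1, Function.iterate_succ_apply, h2]
  intro n
  match n with
  | 0 => simp
  | 1 =>
    simp only [Function.iterate_one, h1, Set.mem_Ioo, not_and_or]
    left; push_neg; linarith
  | (m + 2) =>
    rw [key m]
    rintro ⟨hlo, hhi⟩
    set x := double^[m] θ with hx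
    obtain ⟨hx1, hx2⟩ := horb m
    obtain ⟨hy1, hy2⟩ := horb (m + 1)
    have hnext : double^[m + 1] θ = Int.fract (2 * x) := by
      rw [Function.iterate_succ_apply', double]
    rcases lt_or_ge (2 * x) 1 with h | h
    · rw [hnext, Int.fract_eq_self.mpr ⟨by linarith, h⟩] at hy2
      linarith
    · have : Int.fract (2 * x) = 2 * x - 1 := by
        have e : (2 : ℝ) * x = (1 : ℤ) + (2 * x - 1) := by push_cast; ring
        rw [e, Int.fract_intCast_add, Int.fract_eq_self.mpr ⟨by linarith, by linarith⟩]
        push_cast; ring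
      rw [hnext, this] at hy1
      linarith
end

section
/- If θ ∈ [0, 1/3] and the orbit of θ under doubling is contained in [θ/2, (1+θ)/2], then the orbit of Θ = 1/2 + θ/4 under doubling never enters the open interval ((θ+1)/4, (θ+2)/4). -/
/-- If θ ∈ [0,1/3] and the orbit of θ under doubling is contained in
[θ/2, (1+θ)/2], then the orbit of Θ = 1/2 + θ/4 under doubling never enters
the open interval ((θ+1)/4, (θ+2)/4). -/
theorem stmt1 (θ : ℝ) (hθ : θ ∈ Set.Icc (0:ℝ) (1/3))
    (horb : ∀ n : ℕ, double^[n] θ ∈ Set.Icc (θ/2) ((1+θ)/2)) :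
    ∀ n : ℕ, double^[n] (1/2 + θ/4) ∉ Set.Ioo ((θ+1)/4) ((θ+2)/4) := by
  obtain ⟨h0, h1⟩ := hθ
  -- key: a point of [θ/2,(1+θ)/2] whose image stays in it is not in the middle interval
  have key : ∀ y : ℝ, double y ∈ Set.Icc (θ/2) ((1+θ)/2) →
      y ∉ Set.Ioo ((θ+1)/4) ((θ+2)/4) := by
    rintro y ⟨hd1, hd2⟩ ⟨hl, hr⟩
    rcases le_or_gt 1 (2*y) with h | h
    · have hfr : double y = 2*y - 1 := by
        have : Int.fract (2*y) = Int.fract (2*y - (1:ℤ)) := (Int.fract_sub_intCast _ 1).symm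
        rw [double, this, Int.fract_eq_self.2 ⟨by push_cast; linarith, by push_cast; linarith⟩]
        push_cast; ring
      rw [hfr] at hd1
      linarith
    · have hfr : double y = 2*y := by
        rw [double, Int.fract_eq_self.2 ⟨by linarith, h⟩]
      rw [hfr] at hd2
      linarith
  have hΘ1 : double (1/2 + θ/4) = θ/2 := by
    have : Int.fract (2*(1/2 + θ/4)) = Int.fract (2*(1/2 + θ/4) - (1:ℤ)) :=
      (Int.fract_sub_intCast _ 1).symm
    rw [double, this, Int.fract_eq_self.2 ⟨by push_cast; linarith, by push_cast; linarith⟩]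
    push_cast; ring
  have hΘ2 : double (θ/2) = θ := by
    rw [double, show 2*(θ/2) = θ by ring, Int.fract_eq_self.2 ⟨h0, by linarith⟩]
  intro n
  match n with
  | 0 =>
    simp only [Function.iterate_zero, id]
    rintro ⟨hl, hr⟩; linarith
  | 1 =>
    simp only [Function.iterate_one, hΘ1]
    rintro ⟨hl, hr⟩; linarith
  | (n+2) =>
    have : double^[n+2] (1/2 + θ/4) = double^[n] θ := by
      rw [Function.iterate_add_apply]
      have h2 : double^[2] (1/2 + θ/4) = θ := by
        show double (double (1/2 + θ/4)) = θ
        rw [hΘ1, hΘ2]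
      rw [h2]
    rw [this]
    apply key
    rw [← Function.iterate_succ_apply' double n θ]
    exact horb (n+1)
end
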